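/- arXiv:1610.04839 — 3 statements merged into one kernel-verified Lean document; each statement's English description precedes it below -/
import Mathlib

section
/- Let c ≥ 0 be a real constant and let f : ℂ → ℂ be an entire (everywhere complex-differentiable) function satisfying f(z + 1) = f(z) for all z ∈ ℂ, and suppose there exists M > 0 such that |f(z)| ≤ M·e^{cπ|Im z|} for all z ∈ ℂ. Then for every integer n with 2|n| > c, the n-th Fourier coefficient a_n = ∫_0^1 f(x)·e^{-2πi n x} dx equals 0. -/
/-!
Twist `f` by `e^{-2πinz}`: the product `g` is still entire and `1`-periodic, so by Cauchy's theorem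
on the rectangle `[0,1] × [0,y]` (whose vertical sides cancel by periodicity) the coefficient `a_n`
equals `∫_0^1 g(x + iy) dx` for every real `y`. On that segment `|g| ≤ M e^{cπ|y| + 2πny}`;
moving the line in the direction `y = -t·sign n` makes the exponent `-(2|n| - c)πt`, which tends
to `-∞`, so `a_n = 0`.
-/

open Complex Real Filter Topology

theorem integral_zero_one_eq_integral_add_mul_I {g : ℂ → ℂ} (hg : Differentiable ℂ g)
    (hper : ∀ z, g (z + 1) = g z) (y : ℝ) :
    ∫ x in (0 : ℝ)..1, g x = ∫ x in (0 : ℝ)..1, g (x + y * I) := by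
  have hrect := integral_boundary_rect_eq_zero_of_differentiableOn g 0 (1 + y * I)
    hg.differentiableOn
  have hsides : ∀ t : ℝ, g (1 + t * I) = g (t * I) := fun t => by rw [add_comm, hper]
  simp only [add_re, add_im, one_re, one_im, mul_re, mul_im, I_re, I_im, ofReal_re, ofReal_im,
    zero_re, zero_im, smul_eq_mul] at hrect
  simp only [mul_zero, mul_one, zero_add, add_zero, ofReal_zero, ofReal_one, sub_self,
    zero_mul, hsides] at hrect
  linear_combination hrect

theorem exp_neg_two_pi_I_int_mul_add_one (n : ℤ) (z : ℂ) :
    exp (-2 * π * I * n * (z + 1)) = exp (-2 * π * I * n * z) := by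
  have hn : exp (-2 * π * I * n) = 1 := by
    rw [← exp_int_mul_two_pi_mul_I (-n)]
    push_cast
    ring_nf
  rw [mul_add, Complex.exp_add, mul_one, hn, mul_one]

theorem norm_exp_neg_two_pi_I_mul (a : ℝ) (z : ℂ) :
    ‖exp (-2 * π * I * a * z)‖ = Real.exp (2 * π * a * z.im) := by
  rw [norm_exp]
  congr 1
  simp [mul_re, mul_im]

theorem exists_abs_eq_and_mul_eq_neg (a : ℝ) {t : ℝ} (ht : 0 ≤ t) :
    ∃ y : ℝ, |y| = t ∧ a * y = -(|a| * t) := by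
  rcases le_or_gt 0 a with ha | ha
  · exact ⟨-t, by simp [abs_of_nonneg ht], by rw [abs_of_nonneg ha]; ring⟩
  · exact ⟨t, abs_of_nonneg ht, by rw [abs_of_neg ha]; ring⟩

theorem eq_zero_of_norm_le_mul_exp_neg {E : Type*} [NormedAddCommGroup E] {a : E} {M ε : ℝ}
    (hε : 0 < ε) (h : ∀ t : ℝ, 0 ≤ t → ‖a‖ ≤ M * Real.exp (-ε * t)) : a = 0 := by
  have hlim : Tendsto (fun t : ℝ => M * Real.exp (-ε * t)) atTop (𝓝 0) := by
    simpa using (tendsto_exp_atBot.comp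
      ((tendsto_const_mul_atBot_of_neg (neg_lt_zero.2 hε)).2 tendsto_id)).const_mul M
  exact norm_le_zero_iff.1 (ge_of_tendsto hlim (eventually_atTop.2 ⟨0, h⟩))

theorem fourier_coeff_vanish_general (c : ℝ) (f : ℂ → ℂ)
    (hdiff : Differentiable ℂ f)
    (hper : ∀ z : ℂ, f (z + 1) = f z)
    (M : ℝ)
    (hbound : ∀ z : ℂ, ‖f z‖ ≤ M * Real.exp (c * Real.pi * |z.im|)) :
    ∀ n : ℤ, 2 * |(n : ℝ)| > c →
      (∫ x in (0:ℝ)..1, f x * Complex.exp (-2 * Real.pi * Complex.I * n * x)) = 0 := by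
  intro n hn
  set g : ℂ → ℂ := fun z => f z * exp (-2 * π * I * n * z)
  have hg : Differentiable ℂ g :=
    hdiff.mul (differentiable_exp.comp (differentiable_id.const_mul _))
  have hgper : ∀ z, g (z + 1) = g z := fun z => by
    simp only [g, hper, exp_neg_two_pi_I_int_mul_add_one]
  have hg_le : ∀ z, ‖g z‖ ≤ M * Real.exp (c * π * |z.im| + 2 * π * n * z.im) := fun z => by
    have := norm_exp_neg_two_pi_I_mul n z
    push_cast at this
    rw [norm_mul, this, Real.exp_add, ← mul_assoc]
    gcongr
    exact hbound z
  refine eq_zero_of_norm_le_mul_exp_neg (M := M) (ε := (2 * |(n : ℝ)| - c) * π)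
    (mul_pos (by linarith) pi_pos) fun t ht => ?_
  obtain ⟨y, hy, hny⟩ := exists_abs_eq_and_mul_eq_neg n ht
  rw [integral_zero_one_eq_integral_add_mul_I hg hgper y]
  calc ‖∫ x in (0 : ℝ)..1, g (x + y * I)‖
      ≤ M * Real.exp (c * π * |y| + 2 * π * n * y) := by
        simpa using intervalIntegral.norm_integral_le_of_norm_le_const (a := 0) (b := 1)
          fun x _ => by simpa using hg_le (x + y * I)
    _ = M * Real.exp (-((2 * |(n : ℝ)| - c) * π) * t) := by
        rw [hy, show 2 * π * n * y = 2 * π * (n * y) by ring, hny]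
        ring_nf

/-- If `f` is entire, `1`-periodic, and `|f z| ≤ M e^{cπ|Im z|}`, then the `n`-th Fourier
coefficient `∫_0^1 f x e^{-2πinx} dx` vanishes whenever `2|n| > c`. -/
theorem fourier_coeff_vanish (c : ℝ) (hc : 0 ≤ c) (f : ℂ → ℂ)
    (hdiff : Differentiable ℂ f)
    (hper : ∀ z : ℂ, f (z + 1) = f z)
    (M : ℝ) (hM : 0 < M)
    (hbound : ∀ z : ℂ, ‖f z‖ ≤ M * Real.exp (c * Real.pi * |z.im|)) :
    ∀ n : ℤ, 2 * |(n : ℝ)| > c →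
      (∫ x in (0:ℝ)..1, f x * Complex.exp (-2 * Real.pi * Complex.I * n * x)) = 0 :=
  fourier_coeff_vanish_general c f hdiff hper M hbound
end

section
/- Let f : ℂ → ℂ be an entire (everywhere complex-differentiable) function satisfying f(z + 1) = f(z) for all z ∈ ℂ, and suppose there exists M > 0 such that |f(z)| ≤ M·e^{5π|Im z|} for all z ∈ ℂ. Then there exist complex numbers a_{-2}, a_{-1}, a_0, a_1, a_2 such that f(z) = ∑_{n=-2}^{2} a_n·e^{2πi n z} for all z ∈ ℂ; in other words, f is a trigonometric polynomial with frequencies in {-2,-1,0,1,2}. -/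
open Complex Real
open scoped NNReal

/-- Polynomial Liouville: entire function with growth `C * |q|^s`, `s < 6`, is a polynomial of
degree `< 6`. -/
lemma poly_of_growth {H : ℂ → ℂ} (hH : Differentiable ℂ H) {C : ℝ} {s : ℝ} (hs : s < 6)
    (hC : 0 ≤ C)
    (hb : ∀ q : ℂ, 1 ≤ ‖q‖ → ‖H q‖ ≤ C * ‖q‖ ^ s) :
    ∀ z : ℂ, H z = ∑ n ∈ Finset.range 6,
      (cauchyPowerSeries H 0 1).coeff n * z ^ n := by
  set p := cauchyPowerSeries H 0 1 with hp
  have hpR : ∀ R : ℝ≥0, 0 < R → cauchyPowerSeries H 0 R = p := by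
    intro R hR
    exact (hH.hasFPowerSeriesOnBall 0 hR).hasFPowerSeriesAt.eq_formalMultilinearSeries
      ((hH.hasFPowerSeriesOnBall 0 one_pos).hasFPowerSeriesAt)
  have key : ∀ n : ℕ, 6 ≤ n → p.coeff n = 0 := by
    intro n hn
    have hbound : ∀ R : ℝ, 1 ≤ R → ‖p.coeff n‖ ≤ C * R ^ (s - n) := by
      intro R hR
      have hR0 : (0:ℝ) < R := lt_of_lt_of_le one_pos hR
      have hRnn : (0:ℝ) < R.toNNReal := by simpa [Real.toNNReal_pos] using hR0
      have hps : cauchyPowerSeries H 0 R = p := by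
        have := hpR R.toNNReal hRnn
        rwa [Real.coe_toNNReal R hR0.le] at this
      have h1 : ‖p n‖ ≤ ((2 * π)⁻¹ * ∫ θ : ℝ in (0)..2 * π,
          ‖H (circleMap 0 R θ)‖) * |R|⁻¹ ^ n := by
        rw [← hps]; exact norm_cauchyPowerSeries_le H 0 R n
      have hint : ∫ θ : ℝ in (0)..2 * π, ‖H (circleMap 0 R θ)‖ ≤ 2 * π * (C * R ^ s) := by
        have : ∀ θ ∈ Set.Icc (0:ℝ) (2*π), ‖H (circleMap 0 R θ)‖ ≤ C * R ^ s := by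
          intro θ _
          have habs : ‖circleMap 0 R θ‖ = R := by
            rw [norm_circleMap_zero, abs_of_pos hR0]
          have := hb (circleMap 0 R θ) (by rw [habs]; exact hR)
          rwa [habs] at this
        calc ∫ θ : ℝ in (0)..2 * π, ‖H (circleMap 0 R θ)‖
            ≤ ∫ _ : ℝ in (0)..2 * π, C * R ^ s := by
              apply intervalIntegral.integral_mono_on Real.two_pi_pos.le
              · exact ((hH.continuous.comp (continuous_circleMap 0 R)).norm).intervalIntegrable _ _
              · exact intervalIntegrable_const
              · exact this
          _ = 2 * π * (C * R ^ s) := by simp; ring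
      have h2 : ‖p n‖ ≤ C * R ^ (s - n) := by
        have h3 : ‖p n‖ ≤ ((2 * π)⁻¹ * (2 * π * (C * R ^ s))) * |R|⁻¹ ^ n := by
          refine h1.trans ?_
          have : (0:ℝ) ≤ |R|⁻¹ ^ n := by positivity
          exact mul_le_mul_of_nonneg_right (by gcongr) this
        rw [inv_mul_cancel_left₀ Real.two_pi_pos.ne'] at h3
        refine h3.trans_eq ?_
        rw [abs_of_pos hR0, ← Real.rpow_natCast R⁻¹ n, ← Real.rpow_neg_one R,
          ← Real.rpow_mul hR0.le, mul_assoc, ← Real.rpow_add hR0, neg_one_mul,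
          ← sub_eq_add_neg]
      calc ‖p.coeff n‖ ≤ ‖p n‖ := by
            simpa using (p n).le_opNorm (fun _ => (1:ℂ))
        _ ≤ C * R ^ (s - n) := h2
    have htend : Filter.Tendsto (fun R : ℝ => C * R ^ (s - n)) Filter.atTop (nhds 0) := by
      have : Filter.Tendsto (fun R : ℝ => R ^ (s - n)) Filter.atTop (nhds 0) := by
        have hneg : (0:ℝ) < (n:ℝ) - s := by
          have : (6:ℝ) ≤ n := by exact_mod_cast hn
          linarith
        simpa [neg_sub] using tendsto_rpow_neg_atTop hneg
      simpa using this.const_mul C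
    have : ‖p.coeff n‖ ≤ 0 :=
      ge_of_tendsto htend (Filter.eventually_atTop.mpr ⟨1, hbound⟩)
    simpa using le_antisymm this (norm_nonneg _)
  intro z
  have hsum : HasSum (fun n : ℕ => p n fun _ => z) (H z) := by
    have := (hH.hasFPowerSeriesOnBall 0 one_pos).hasSum (y := z) (by simp)
    simpa using this
  have hsum' : HasSum (fun n : ℕ => p.coeff n * z ^ n) (H z) := by
    refine hsum.congr_fun fun n => ?_
    rw [FormalMultilinearSeries.apply_eq_pow_smul_coeff, smul_eq_mul]; ring
  refine hsum'.unique ?_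
  apply hasSum_sum_of_ne_finset_zero
  intro n hn
  have h6 : 6 ≤ n := by simpa using hn
  simp [key n h6]

/-- An entire `1`-periodic function with `|f z| ≤ M e^{5π|Im z|}` is a trigonometric
polynomial with frequencies in `{-2, -1, 0, 1, 2}`. -/
theorem entire_periodic_growth_is_trig_poly (f : ℂ → ℂ)
    (hdiff : Differentiable ℂ f)
    (hper : ∀ z : ℂ, f (z + 1) = f z)
    (M : ℝ) (hM : 0 < M)
    (hbound : ∀ z : ℂ, ‖f z‖ ≤ M * Real.exp (5 * Real.pi * |z.im|)) :
    ∃ a : ℤ → ℂ, ∀ z : ℂ,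
      f z = ∑ n ∈ Finset.Icc (-2 : ℤ) 2, a n * Complex.exp (2 * Real.pi * Complex.I * n * z) := by
  have hper' : Function.Periodic f ((1:ℝ) : ℂ) := fun z => by simpa using hper z
  set F := Function.Periodic.cuspFunction 1 f with hF
  have hFdiff : ∀ q : ℂ, q ≠ 0 → DifferentiableAt ℂ F q := by
    intro q hq
    have := Function.Periodic.differentiableAt_cuspFunction (one_ne_zero)
      hper' (hdiff (Function.Periodic.invQParam 1 q))
    rwa [Function.Periodic.qParam_right_inv one_ne_zero hq] at this
  have hFbound : ∀ q : ℂ, q ≠ 0 →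
      ‖F q‖ ≤ M * Real.exp (5 / 2 * |Real.log (‖q‖)|) := by
    intro q hq
    rw [hF, Function.Periodic.cuspFunction_eq_of_nonzero _ _ hq]
    refine (hbound _).trans_eq ?_
    congr 2
    rw [Function.Periodic.im_invQParam]
    rw [abs_mul, abs_div, abs_neg, abs_one, abs_of_pos Real.two_pi_pos]
    field_simp
  -- the function `q ↦ q^3 F q`, extended by `0` at `0`
  set H : ℂ → ℂ := Function.update (fun q => q ^ 3 * F q) 0 0 with hHdef
  have hH0 : H 0 = 0 := Function.update_self _ _ _
  have hHq : ∀ q : ℂ, q ≠ 0 → H q = q ^ 3 * F q := fun q hq =>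
    Function.update_of_ne hq _ _
  -- bound near zero
  have hHsmall : ∀ q : ℂ, ‖q‖ ≤ 1 → ‖H q‖ ≤
      M * Real.sqrt (‖q‖) := by
    intro q hq1
    rcases eq_or_ne q 0 with rfl | hq
    · simp [hH0, hM.le]
    · have habs : (0:ℝ) < ‖q‖ := by
        simpa [norm_pos_iff] using hq
      have hlog : Real.log (‖q‖) ≤ 0 := Real.log_nonpos habs.le hq1
      rw [hHq q hq, norm_mul, norm_pow]
      have h1 : ‖F q‖ ≤ M * (‖q‖) ^ (-(5/2 : ℝ)) := by
        refine (hFbound q hq).trans_eq ?_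
        rw [abs_of_nonpos hlog, Real.rpow_def_of_pos habs]
        ring_nf
      calc ‖q‖ ^ 3 * ‖F q‖
          ≤ ‖q‖ ^ 3 * (M * (‖q‖) ^ (-(5/2 : ℝ))) := by
            exact mul_le_mul_of_nonneg_left h1 (by positivity)
        _ = M * (‖q‖) ^ ((3:ℝ) + -(5/2)) := by
            rw [Real.rpow_add habs, ← Real.rpow_natCast (‖q‖) 3]
            push_cast
            ring
        _ = M * Real.sqrt (‖q‖) := by
            rw [Real.sqrt_eq_rpow]; norm_num
  -- bound at infinity
  have hHbig : ∀ q : ℂ, 1 ≤ ‖q‖ → ‖H q‖ ≤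
      M * ‖q‖ ^ ((11:ℝ)/2) := by
    intro q hq1
    have hq : q ≠ 0 := by
      intro h; rw [h] at hq1; simp at hq1; linarith
    have habs : (0:ℝ) < ‖q‖ := lt_of_lt_of_le one_pos hq1
    have hlog : 0 ≤ Real.log (‖q‖) := Real.log_nonneg hq1
    rw [hHq q hq, norm_mul, norm_pow]
    have h1 : ‖F q‖ ≤ M * (‖q‖) ^ ((5/2 : ℝ)) := by
      refine (hFbound q hq).trans_eq ?_
      rw [_root_.abs_of_nonneg hlog, Real.rpow_def_of_pos habs]
      ring_nf
    calc ‖q‖ ^ 3 * ‖F q‖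
        ≤ ‖q‖ ^ 3 * (M * (‖q‖) ^ ((5/2 : ℝ))) :=
          mul_le_mul_of_nonneg_left h1 (by positivity)
      _ = M * (‖q‖) ^ ((3:ℝ) + 5/2) := by
          rw [Real.rpow_add habs, ← Real.rpow_natCast (‖q‖) 3]
          push_cast
          ring
      _ = M * ‖q‖ ^ ((11:ℝ)/2) := by norm_num
  -- H is entire
  have hHdiff : Differentiable ℂ H := by
    intro z
    rcases eq_or_ne z 0 with rfl | hz
    · have hcont : ContinuousAt H 0 := by
        rw [ContinuousAt, hH0]
        have hb' : ∀ᶠ q : ℂ in nhds 0, ‖H q‖ ≤ M * Real.sqrt (‖q‖) := by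
          filter_upwards [Metric.closedBall_mem_nhds (0:ℂ) one_pos] with q hq
          exact hHsmall q (by simpa [Complex.dist_eq] using hq)
        have ht : Filter.Tendsto (fun q : ℂ => M * Real.sqrt (‖q‖)) (nhds 0)
            (nhds 0) := by
          have : Filter.Tendsto (fun q : ℂ => M * Real.sqrt (‖q‖)) (nhds 0)
              (nhds (M * Real.sqrt (‖(0:ℂ)‖))) :=
            (Real.continuous_sqrt.comp continuous_norm).continuousAt.const_mul M
          simpa using this
        exact squeeze_zero_norm' hb' ht
      have hd : ∀ᶠ q in nhdsWithin 0 {(0:ℂ)}ᶜ, DifferentiableAt ℂ H q := by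
        apply eventually_nhdsWithin_of_forall
        intro q hq
        have hq' : q ≠ 0 := hq
        have : DifferentiableAt ℂ (fun q : ℂ => q ^ 3 * F q) q :=
          (differentiableAt_pow 3).mul (hFdiff q hq')
        refine this.congr_of_eventuallyEq ?_
        filter_upwards [isOpen_compl_singleton.mem_nhds hq'] with w hw
        exact hHq w hw
      exact (Complex.analyticAt_of_differentiable_on_punctured_nhds_of_continuousAt
        hd hcont).differentiableAt
    · have : DifferentiableAt ℂ (fun q : ℂ => q ^ 3 * F q) z :=
        (differentiableAt_pow 3).mul (hFdiff z hz)
      refine this.congr_of_eventuallyEq ?_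
      filter_upwards [isOpen_compl_singleton.mem_nhds hz] with w hw
      exact hHq w hw
  -- H is a polynomial of degree < 6
  set c : ℕ → ℂ := (cauchyPowerSeries H 0 1).coeff with hc
  have hpoly : ∀ z : ℂ, H z = ∑ n ∈ Finset.range 6, c n * z ^ n :=
    poly_of_growth hHdiff (by norm_num) hM.le hHbig
  have hc0 : c 0 = 0 := by
    have := hpoly 0
    rw [hH0] at this
    simpa [Finset.sum_range_succ] using this.symm
  refine ⟨fun k => c (k + 3).toNat, fun z => ?_⟩
  set q : ℂ := Complex.exp (2 * Real.pi * Complex.I * z) with hqdef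
  have hq : q ≠ 0 := Complex.exp_ne_zero _
  have hfz : q ^ 3 * f z = ∑ n ∈ Finset.range 6, c n * q ^ n := by
    have h1 : F q = f z := by
      have := Function.Periodic.eq_cuspFunction one_ne_zero hper' z
      rw [← hF] at this
      rw [← this]
      congr 1
      rw [Function.Periodic.qParam, hqdef]
      push_cast
      ring_nf
    rw [← h1, ← hHq q hq, hpoly q]
  have hqk : ∀ k : ℤ, Complex.exp (2 * Real.pi * Complex.I * k * z) = q ^ k := by
    intro k
    rw [hqdef, ← Complex.exp_int_mul]
    congr 1
    push_cast
    ring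
  rw [show Finset.Icc (-2 : ℤ) 2 = {-2, -1, 0, 1, 2} by decide]
  rw [Finset.sum_insert (by decide), Finset.sum_insert (by decide),
      Finset.sum_insert (by decide), Finset.sum_insert (by decide), Finset.sum_singleton]
  rw [hqk (-2), hqk (-1), hqk 0, hqk 1, hqk 2]
  beta_reduce
  rw [show ((-2:ℤ) + 3).toNat = 1 from rfl, show ((-1:ℤ) + 3).toNat = 2 from rfl,
      show ((0:ℤ) + 3).toNat = 3 from rfl, show ((1:ℤ) + 3).toNat = 4 from rfl,
      show ((2:ℤ) + 3).toNat = 5 from rfl]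
  have e2 : q ^ (-2:ℤ) = (q ^ 2)⁻¹ := by
    rw [zpow_neg, show ((2:ℤ)) = ((2:ℕ):ℤ) from rfl, zpow_natCast]
  have e1 : q ^ (-1:ℤ) = q⁻¹ := by
    rw [zpow_neg, zpow_one]
  have e0 : q ^ (0:ℤ) = 1 := zpow_zero q
  have ep1 : q ^ (1:ℤ) = q := zpow_one q
  have ep2 : q ^ (2:ℤ) = q ^ 2 := by
    rw [show ((2:ℤ)) = ((2:ℕ):ℤ) from rfl, zpow_natCast]
  rw [e2, e1, e0, ep1, ep2]
  simp only [Finset.sum_range_succ, Finset.sum_range_zero, hc0] at hfz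
  refine mul_left_cancel₀ (pow_ne_zero 3 hq) ?_
  rw [hfz]
  field_simp
  ring
end

section
/- The following Ramanujan-like series for 1/π² holds: ∑_{n=0}^{∞} ((1/2)_n)^5/((1)_n)^5 · (−1)^n/4^n · (20n² + 8n + 1) = 8/π², where the series on the left converges absolutely. -/
/-!
The proof is Guillera's Wilf–Zeilberger argument. The summand is `G(n, 0)` for a WZ pair `(F, G)`
with `F(0, k) = 0`, so telescoping in `n` shows that `∑ₙ G(n, k)` does not depend on `k`. The
kernel of the pair carries a factor `C(n+k, k)⁻⁴`, so as `k → ∞` the terms with `n ≥ 1` vanish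
uniformly (`|G(n, k)| ≤ 33 (n+1)² 4⁻ⁿ / (k+1)²`), while `G(0, k) = (8k² + 4k + 1) ((1/2)ₖ / k!)⁴`
tends to `8/π²` by Wallis' product.
-/

/-- The Pochhammer symbol (ascending factorial) `(a)_n = ∏_{k=0}^{n-1} (a + k)`. -/
def poch (a : ℝ) (n : ℕ) : ℝ := ∏ k ∈ Finset.range n, (a + k)

open Filter Topology Finset Nat

lemma poch_zero (a : ℝ) : poch a 0 = 1 := prod_range_zero _

lemma poch_succ (a : ℝ) (n : ℕ) : poch a (n + 1) = poch a n * (a + n) := prod_range_succ _ _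

lemma poch_pos {a : ℝ} (ha : 0 < a) (n : ℕ) : 0 < poch a n :=
  prod_pos fun k _ => by positivity

lemma poch_one (n : ℕ) : poch 1 n = n ! := by
  induction n with
  | zero => simp [poch_zero]
  | succ n ih => rw [poch_succ, ih, factorial_succ]; push_cast; ring

lemma poch_half_le_factorial (n : ℕ) : poch (1 / 2) n ≤ n ! := by
  rw [← poch_one]
  exact prod_le_prod (fun k _ => by positivity) fun k _ => by linarith

lemma poch_half_sq_mul_wallis (k : ℕ) :
    poch (1 / 2) k ^ 2 * (2 * k + 1) * Real.Wallis.W k = (k ! : ℝ) ^ 2 := by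
  induction k with
  | zero => simp [poch_zero, Real.Wallis.W]
  | succ k ih =>
    rw [poch_succ, Real.Wallis.W_succ, factorial_succ]
    push_cast
    field_simp
    linear_combination (2 * (k : ℝ) + 1) * (2 * k + 3) * ih

lemma summable_add_one_sq_mul_geometric {r : ℝ} (h : ‖r‖ < 1) :
    Summable fun n : ℕ => ((n : ℝ) + 1) ^ 2 * r ^ n := by
  have := ((summable_pow_mul_geometric_of_norm_lt_one 2 h).add
    ((summable_pow_mul_geometric_of_norm_lt_one 1 h).mul_left 2)).add
      (summable_geometric_of_norm_lt_one h)
  exact this.congr fun n => by ring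

def IsWZPair {E : Type*} [AddCommGroup E] (F G : ℕ → ℕ → E) : Prop :=
  ∀ n k, F (n + 1) k - F n k = G n (k + 1) - G n k

section WZ

variable {E : Type*} [AddCommGroup E] {F G : ℕ → ℕ → E}

lemma IsWZPair.sum_range_eq (hwz : IsWZPair F G)
    (hF : ∀ k, F 0 k = 0) (N K : ℕ) :
    ∑ n ∈ range N, G n K = ∑ n ∈ range N, G n 0 + ∑ k ∈ range K, F N k := by
  induction K with
  | zero => simp
  | succ K ih =>
    have hstep : ∑ n ∈ range N, G n (K + 1) - ∑ n ∈ range N, G n K = F N K := by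
      rw [← sum_sub_distrib, sum_congr rfl fun n _ => (hwz n K).symm,
        sum_range_sub (fun n => F n K), hF, sub_zero]
    rw [sum_range_succ, ← add_assoc, ← ih, ← hstep, add_sub_cancel]

lemma IsWZPair.tsum_eq [TopologicalSpace E] [IsTopologicalAddGroup E] [T2Space E]
    (hwz : IsWZPair F G) (hF : ∀ k, F 0 k = 0)
    (hF_lim : ∀ k, Tendsto (fun n => F n k) atTop (𝓝 0)) (hG : ∀ k, Summable fun n => G n k)
    (K : ℕ) : ∑' n, G n K = ∑' n, G n 0 := by
  have hlim := (hG 0).hasSum.tendsto_sum_nat.add (tendsto_finsetSum (range K) fun k _ => hF_lim k)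
  rw [sum_const_zero, add_zero] at hlim
  simp_rw [← hwz.sum_range_eq hF] at hlim
  exact tendsto_nhds_unique (hG K).hasSum.tendsto_sum_nat hlim

end WZ

namespace Guillera

noncomputable def kernel (n k : ℕ) : ℝ :=
  (-1 / 4 : ℝ) ^ n * poch (1 / 2) n ^ 5 * poch (1 / 2) k ^ 4 / (((n + k)! : ℝ) ^ 4 * n !)

noncomputable def F (n k : ℕ) : ℝ :=
  kernel n k * (n * (16 * n + 32 * k + 8))

noncomputable def G (n k : ℕ) : ℝ :=
  kernel n k * (20 * n ^ 2 + 8 * n + 1 + 4 * k + 8 * k ^ 2 + 24 * n * k)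

theorem isWZPair : IsWZPair F G := by
  intro n k
  have hA := poch_pos (a := 1 / 2) (by norm_num) n
  have hB := poch_pos (a := 1 / 2) (by norm_num) k
  unfold F G kernel
  rw [show n + 1 + k = n + k + 1 by ring, ← add_assoc, factorial_succ, factorial_succ,
    poch_succ, poch_succ]
  push_cast
  field_simp
  ring

theorem F_zero_left (k : ℕ) : F 0 k = 0 := by simp [F]

theorem abs_kernel_le (n k : ℕ) : |kernel n k| ≤ (1 / 4) ^ n / ((n + k).choose k : ℝ) ^ 4 := by
  have hA := poch_pos (a := 1 / 2) (by norm_num) n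
  have hB := poch_pos (a := 1 / 2) (by norm_num) k
  calc |kernel n k|
      = (1 / 4) ^ n * poch (1 / 2) n ^ 5 * poch (1 / 2) k ^ 4 / (((n + k)! : ℝ) ^ 4 * n !) := by
        simp only [kernel, abs_div, abs_mul, abs_pow, abs_of_pos hA, abs_of_pos hB, Nat.abs_cast]
        norm_num
    _ ≤ (1 / 4) ^ n * (n ! : ℝ) ^ 5 * (k ! : ℝ) ^ 4 / (((n + k)! : ℝ) ^ 4 * n !) := by
        gcongr <;> exact poch_half_le_factorial _
    _ = (1 / 4) ^ n / ((n + k).choose k : ℝ) ^ 4 := by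
        rw [← add_choose_mul_factorial_mul_factorial]
        push_cast
        field_simp

theorem abs_kernel_mul_le {p : ℝ} (n k : ℕ)
    (hp : |p| ≤ 33 * ((n : ℝ) + 1) ^ 2 * ((k : ℝ) + 1) ^ 2) :
    |kernel n k * p| ≤
      33 * ((k : ℝ) + 1) ^ 2 * (((n : ℝ) + 1) ^ 2 * (1 / 4) ^ n) / ((n + k).choose k : ℝ) ^ 4 := by
  rw [abs_mul]
  exact (mul_le_mul (abs_kernel_le n k) hp (abs_nonneg _) (by positivity)).trans_eq (by ring)

theorem summable_kernel_mul {p : ℕ → ℝ} (k : ℕ)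
    (hp : ∀ n, |p n| ≤ 33 * ((n : ℝ) + 1) ^ 2 * ((k : ℝ) + 1) ^ 2) :
    Summable fun n => kernel n k * p n := by
  have hsum := summable_add_one_sq_mul_geometric (r := 1 / 4) (by norm_num)
  refine .of_norm_bounded (hsum.mul_left (33 * ((k : ℝ) + 1) ^ 2)) fun n => ?_
  refine (abs_kernel_mul_le n k (hp n)).trans (div_le_self (by positivity) (one_le_pow₀ ?_))
  exact_mod_cast choose_pos (le_add_left k n)

theorem abs_G_factor_le (n k : ℕ) :
    |(20 * n ^ 2 + 8 * n + 1 + 4 * k + 8 * k ^ 2 + 24 * n * k : ℝ)| ≤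
      33 * ((n : ℝ) + 1) ^ 2 * ((k : ℝ) + 1) ^ 2 := by
  have hn : (0 : ℝ) ≤ n := n.cast_nonneg
  have hk : (0 : ℝ) ≤ k := k.cast_nonneg
  rw [abs_of_nonneg (by positivity)]
  nlinarith [mul_nonneg hn hk, mul_nonneg (mul_nonneg hn hn) hk, mul_nonneg (mul_nonneg hn hk) hk,
    mul_nonneg (mul_nonneg hn hn) (mul_nonneg hk hk)]

theorem abs_F_factor_le (n k : ℕ) :
    |(n * (16 * n + 32 * k + 8) : ℝ)| ≤ 33 * ((n : ℝ) + 1) ^ 2 * ((k : ℝ) + 1) ^ 2 := by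
  have hn : (0 : ℝ) ≤ n := n.cast_nonneg
  have hk : (0 : ℝ) ≤ k := k.cast_nonneg
  rw [abs_of_nonneg (by positivity)]
  nlinarith [mul_nonneg hn hk, mul_nonneg (mul_nonneg hn hn) hk, mul_nonneg (mul_nonneg hn hk) hk,
    mul_nonneg (mul_nonneg hn hn) (mul_nonneg hk hk)]

theorem summable_G (k : ℕ) : Summable fun n => G n k :=
  summable_kernel_mul k (abs_G_factor_le · k)

theorem tendsto_F (k : ℕ) : Tendsto (fun n => F n k) atTop (𝓝 0) :=
  (summable_kernel_mul k (abs_F_factor_le · k)).tendsto_atTop_zero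

theorem abs_G_succ_le (n k : ℕ) :
    |G (n + 1) k| ≤ 33 * ((((n + 1 : ℕ) : ℝ) + 1) ^ 2 * (1 / 4) ^ (n + 1)) / ((k : ℝ) + 1) ^ 2 := by
  have hC : ((k : ℝ) + 1) ^ 4 ≤ ((n + 1 + k).choose k : ℝ) ^ 4 := by
    gcongr
    exact_mod_cast (choose_succ_self_right k).symm.le.trans (choose_le_choose k (by omega))
  refine (abs_kernel_mul_le (n + 1) k (abs_G_factor_le (n + 1) k)).trans ?_
  rw [div_le_div_iff₀ ((by positivity : (0 : ℝ) < _).trans_le hC) (by positivity)]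
  calc _ = 33 * ((((n + 1 : ℕ) : ℝ) + 1) ^ 2 * (1 / 4) ^ (n + 1)) * ((k : ℝ) + 1) ^ 4 := by ring
    _ ≤ _ := by gcongr

theorem tendsto_tsum_G_succ : Tendsto (fun k => ∑' n, G (n + 1) k) atTop (𝓝 0) := by
  obtain ⟨S, hS⟩ : Summable fun n : ℕ => 33 * ((((n + 1 : ℕ) : ℝ) + 1) ^ 2 * (1 / 4) ^ (n + 1)) :=
    ((summable_nat_add_iff 1).mpr
      (summable_add_one_sq_mul_geometric (r := 1 / 4) (by norm_num))).mul_left 33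
  refine squeeze_zero_norm
    (fun k => tsum_of_norm_bounded (hS.div_const (((k : ℝ) + 1) ^ 2)) (abs_G_succ_le · k)) ?_
  simpa [div_eq_mul_inv] using (tendsto_one_div_add_atTop_nhds_zero_nat.pow 2).const_mul S

theorem kernel_zero_left (k : ℕ) : kernel 0 k = 1 / ((2 * k + 1) * Real.Wallis.W k) ^ 2 := by
  have hW := Real.Wallis.W_pos k
  have h := poch_half_sq_mul_wallis k
  simp only [kernel, pow_zero, poch_zero, zero_add, factorial_zero, cast_one, one_mul, mul_one]
  field_simp
  linear_combination (poch (1 / 2) k ^ 2 * (2 * k + 1) * Real.Wallis.W k + (k ! : ℝ) ^ 2) * h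

theorem tendsto_G_zero_left : Tendsto (fun k => G 0 k) atTop (𝓝 (8 / Real.pi ^ 2)) := by
  -- `G 0 k = (1 + (2k / (2k + 1))²) / W k²` with `W k → π / 2`
  have h := ((Stirling.tendsto_self_div_two_mul_self_add_one.const_mul 2).pow 2 |>.const_add 1).div
    (Real.Wallis.tendsto_W_nhds_pi_div_two.pow 2) (by positivity)
  convert h using 1
  · funext k
    have hW := Real.Wallis.W_pos k
    rw [G, kernel_zero_left, Pi.div_apply, cast_zero]
    field_simp
    ring
  · congr 1
    field_simp
    norm_num

theorem tsum_G_zero_right : ∑' n, G n 0 = 8 / Real.pi ^ 2 := by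
  have hsplit (k : ℕ) : G 0 k + ∑' n, G (n + 1) k = ∑' n, G n 0 :=
    (summable_G k).tsum_eq_zero_add.symm.trans
      (isWZPair.tsum_eq F_zero_left tendsto_F summable_G k)
  have hlim := (tendsto_G_zero_left.add tendsto_tsum_G_succ).congr hsplit
  rwa [add_zero, tendsto_const_nhds_iff] at hlim

theorem G_zero_right (n : ℕ) :
    G n 0 =
      poch (1 / 2) n ^ 5 / poch 1 n ^ 5 * ((-1) ^ n / 4 ^ n) * (20 * (n : ℝ) ^ 2 + 8 * n + 1) := by
  simp only [G, kernel, poch_one, poch_zero, add_zero, cast_zero, div_pow]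
  ring

end Guillera

/-- Guillera's series: `∑ ((1/2)_n)^5/((1)_n)^5 · (−1)^n/4^n · (20n²+8n+1) = 8/π²`. -/
theorem guillera_series_f3 :
    (Summable fun n : ℕ =>
      (poch (1/2) n) ^ 5 / (poch 1 n) ^ 5 * ((-1) ^ n / 4 ^ n) *
        (20 * (n : ℝ) ^ 2 + 8 * n + 1)) ∧
    ∑' n : ℕ, (poch (1/2) n) ^ 5 / (poch 1 n) ^ 5 * ((-1) ^ n / 4 ^ n) *
        (20 * (n : ℝ) ^ 2 + 8 * n + 1) = 8 / Real.pi ^ 2 := by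
  simp_rw [← Guillera.G_zero_right]
  exact ⟨Guillera.summable_G 0, Guillera.tsum_G_zero_right⟩
end
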